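/- For all real a ≥ b > 0 and all t ∈ ℝ, the triangle T(t) of the homothetic Poncelet family satisfies (s₁(t)² + s₂(t)² + s₃(t)²)/(4·Δ(t)) = √3·(a² + b²)/(2ab), where s₁(t), s₂(t), s₃(t) are its sidelengths and Δ(t) its area. Equivalently, the family is equibrocardal: its Brocard angle ω, defined by cot ω = (s₁² + s₂² + s₃²)/(4Δ), is independent of t and satisfies cot ω = √3·(a² + b²)/(2ab). -/

import Mathlib

open Real

/-- A point of the Euclidean plane `ℝ²`. -/
noncomputable def pt (x y : ℝ) : EuclideanSpace ℝ (Fin 2) := WithLp.toLp 2 ![x, y]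

/-- Vertex `k` of the triangle `T(t)` of the homothetic Poncelet family. -/
noncomputable def homP (a b t : ℝ) (k : ℕ) : EuclideanSpace ℝ (Fin 2) :=
  pt (a * Real.cos (t + 2 * π * k / 3)) (b * Real.sin (t + 2 * π * k / 3))

/-- Determinant of two plane vectors. -/
noncomputable def det2 (u v : EuclideanSpace ℝ (Fin 2)) : ℝ := u 0 * v 1 - u 1 * v 0

/-- Area of the triangle with vertices `A B C`. -/
noncomputable def triArea (A B C : EuclideanSpace ℝ (Fin 2)) : ℝ :=
  (1 / 2) * |det2 (B - A) (C - A)|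

/-!
The vertices of `T(t)` are the images under `diag(a, b)` of an equilateral triangle inscribed in
the unit circle. Expanding the rotations by `2π/3` and `4π/3`, the sum of the squared sides is
`9(a² + b²)/2` and the signed area is `3√3ab/4`, both by `sin² t + cos² t = 1` alone, so their
ratio does not depend on `t`.
-/

lemma pt_sub_pt (x y x' y' : ℝ) : pt x y - pt x' y' = pt (x - x') (y - y') := by
  ext i
  fin_cases i <;> simp [pt]

lemma dist_pt_pt_sq (x y x' y' : ℝ) :
    dist (pt x y) (pt x' y') ^ 2 = (x - x') ^ 2 + (y - y') ^ 2 := by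
  rw [EuclideanSpace.dist_eq, sq_sqrt (by positivity)]
  simp [pt, Fin.sum_univ_two, Real.dist_eq, sq_abs]

lemma det2_pt_pt (x y x' y' : ℝ) : det2 (pt x y) (pt x' y') = x * y' - y * x' := by
  simp [det2, pt]

lemma cos_two_pi_div_three : cos (2 * π / 3) = -(1 / 2) := by
  rw [show 2 * π / 3 = π - π / 3 by ring, cos_pi_sub, cos_pi_div_three]

lemma sin_two_pi_div_three : sin (2 * π / 3) = √3 / 2 := by
  rw [show 2 * π / 3 = π - π / 3 by ring, sin_pi_sub, sin_pi_div_three]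

lemma cos_four_pi_div_three : cos (4 * π / 3) = -(1 / 2) := by
  rw [show 4 * π / 3 = π / 3 + π by ring, cos_add_pi, cos_pi_div_three]

lemma sin_four_pi_div_three : sin (4 * π / 3) = -(√3 / 2) := by
  rw [show 4 * π / 3 = π / 3 + π by ring, sin_add_pi, sin_pi_div_three]

section HomotheticFamily

variable (a b t : ℝ)

lemma homP_zero : homP a b t 0 = pt (a * cos t) (b * sin t) := by
  simp [homP]

lemma homP_one : homP a b t 1 =
    pt (a * (-(1 / 2) * cos t - √3 / 2 * sin t)) (b * (-(1 / 2) * sin t + √3 / 2 * cos t)) := by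
  rw [homP, Nat.cast_one, mul_one, cos_add, sin_add, cos_two_pi_div_three, sin_two_pi_div_three]
  ring_nf

lemma homP_two : homP a b t 2 =
    pt (a * (-(1 / 2) * cos t + √3 / 2 * sin t)) (b * (-(1 / 2) * sin t - √3 / 2 * cos t)) := by
  rw [homP, show t + 2 * π * ((2 : ℕ) : ℝ) / 3 = t + 4 * π / 3 by push_cast; ring,
    cos_add, sin_add, cos_four_pi_div_three, sin_four_pi_div_three]
  ring_nf

lemma sum_dist_sq_homP :
    dist (homP a b t 1) (homP a b t 2) ^ 2 + dist (homP a b t 2) (homP a b t 0) ^ 2 +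
      dist (homP a b t 0) (homP a b t 1) ^ 2 = 9 / 2 * (a ^ 2 + b ^ 2) := by
  rw [homP_zero, homP_one, homP_two, dist_pt_pt_sq, dist_pt_pt_sq, dist_pt_pt_sq]
  linear_combination (3 / 2 * a ^ 2 * sin t ^ 2 + 3 / 2 * b ^ 2 * cos t ^ 2) * sq_sqrt zero_le_three
    + 9 / 2 * (a ^ 2 + b ^ 2) * sin_sq_add_cos_sq t

lemma det2_homP :
    det2 (homP a b t 1 - homP a b t 0) (homP a b t 2 - homP a b t 0) = 3 * √3 / 2 * (a * b) := by
  rw [homP_zero, homP_one, homP_two, pt_sub_pt, pt_sub_pt, det2_pt_pt]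
  linear_combination 3 * √3 / 2 * (a * b) * sin_sq_add_cos_sq t

lemma triArea_homP :
    triArea (homP a b t 0) (homP a b t 1) (homP a b t 2) = 3 * √3 / 4 * |a * b| := by
  rw [triArea, det2_homP, abs_mul, abs_of_pos (by positivity)]
  ring

end HomotheticFamily

/-- The homothetic Poncelet family is equibrocardal: the quantity
`(s₁² + s₂² + s₃²)/(4Δ)`, i.e. the cotangent of the Brocard angle `ω`, is
independent of `t` and equals `√3·(a² + b²)/(2ab)`. -/
theorem homothetic_equibrocardal (a b : ℝ) (hab : a ≥ b) (hb : 0 < b) (t : ℝ) :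
    (dist (homP a b t 1) (homP a b t 2) ^ 2 +
     dist (homP a b t 2) (homP a b t 0) ^ 2 +
     dist (homP a b t 0) (homP a b t 1) ^ 2) /
      (4 * triArea (homP a b t 0) (homP a b t 1) (homP a b t 2)) =
    Real.sqrt 3 * (a ^ 2 + b ^ 2) / (2 * a * b) ∧
    ∀ ω ∈ Set.Ioo 0 (π / 2),
      Real.cot ω =
        (dist (homP a b t 1) (homP a b t 2) ^ 2 +
         dist (homP a b t 2) (homP a b t 0) ^ 2 +
         dist (homP a b t 0) (homP a b t 1) ^ 2) /
          (4 * triArea (homP a b t 0) (homP a b t 1) (homP a b t 2)) →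
      Real.cot ω = Real.sqrt 3 * (a ^ 2 + b ^ 2) / (2 * a * b) := by
  have ha : 0 < a := hb.trans_le hab
  have hratio : (dist (homP a b t 1) (homP a b t 2) ^ 2 + dist (homP a b t 2) (homP a b t 0) ^ 2 +
      dist (homP a b t 0) (homP a b t 1) ^ 2) /
        (4 * triArea (homP a b t 0) (homP a b t 1) (homP a b t 2)) =
      √3 * (a ^ 2 + b ^ 2) / (2 * a * b) := by
    rw [sum_dist_sq_homP, triArea_homP, abs_of_pos (mul_pos ha hb),
      div_eq_div_iff (by positivity) (by positivity)]
    linear_combination -3 * a * b * (a ^ 2 + b ^ 2) * sq_sqrt zero_le_three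
  exact ⟨hratio, fun _ _ hcot => hcot.trans hratio⟩
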